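/- arXiv:2403.03754 — 4 statements merged into one kernel-verified Lean document; each statement's English description precedes it below -/
import Mathlib

section
/- Let n ≥ 2 and let A = (a_{ij}) be an n×n matrix over ℤ[T,T⁻¹] that is invertible over ℤ[T,T⁻¹] and commutes with the Burau generator matrix ψ_k for every k = 1, …, n−1. Then there exists a Laurent polynomial p ∈ ℤ[T,T⁻¹] such that a_{ij} = T^{j−1} p for all indices i ≠ j. -/
open LaurentPolynomial

/-- The unreduced Burau generator matrix (0-indexed: rows/columns `k` and `k+1`
carry the nontrivial block), an `n × n` matrix over `ℤ[T,T⁻¹]`. -/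
noncomputable def burauGen (n : ℕ) (k : ℕ) :
    Matrix (Fin n) (Fin n) (LaurentPolynomial ℤ) :=
  Matrix.of fun i j =>
    if (i : ℕ) = k ∧ (j : ℕ) = k then 1 - T 1
    else if (i : ℕ) = k ∧ (j : ℕ) = k + 1 then T 1
    else if (i : ℕ) = k + 1 ∧ (j : ℕ) = k then 1
    else if (i : ℕ) = k + 1 ∧ (j : ℕ) = k + 1 then 0
    else if i = j then 1 else 0

set_option maxHeartbeats 1000000 in
/-- The fundamental entrywise relation extracted from commutation with a Burau
generator, via the rank-one decomposition `burauGen n k = 1 + v wᵀ`. -/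
lemma burau_rel {n k : ℕ} (hk : k + 1 < n)
    (A : Matrix (Fin n) (Fin n) (LaurentPolynomial ℤ))
    (h : A * burauGen n k = burauGen n k * A) (i j : Fin n) :
    (A i ⟨k+1, hk⟩ - T 1 * A i ⟨k, by omega⟩) *
      ((if j = (⟨k, by omega⟩ : Fin n) then 1 else 0) -
        if j = (⟨k+1, hk⟩ : Fin n) then 1 else 0)
    = ((if i = (⟨k+1, hk⟩ : Fin n) then 1 else 0) -
        T 1 * if i = (⟨k, by omega⟩ : Fin n) then 1 else 0) *
      (A ⟨k, by omega⟩ j - A ⟨k+1, hk⟩ j) := by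
  have hkn : k < n := by omega
  set k₁ : Fin n := ⟨k, hkn⟩
  set k₂ : Fin n := ⟨k+1, hk⟩
  set v : Fin n → LaurentPolynomial ℤ :=
    fun l => (if l = k₂ then 1 else 0) - T 1 * (if l = k₁ then 1 else 0) with hv
  set w : Fin n → LaurentPolynomial ℤ :=
    fun l => (if l = k₁ then 1 else 0) - (if l = k₂ then 1 else 0) with hw
  have hB : burauGen n k = 1 + Matrix.vecMulVec v w := by
    ext a b
    simp only [burauGen, Matrix.of_apply, Matrix.add_apply, Matrix.one_apply,
      Matrix.vecMulVec_apply, hv, hw, k₁, k₂, Fin.ext_iff]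
    split_ifs <;> first | omega | ring
  have h2 : (A * Matrix.vecMulVec v w) i j = (Matrix.vecMulVec v w * A) i j := by
    have h' : A * Matrix.vecMulVec v w = Matrix.vecMulVec v w * A := by
      have h3 := h
      rw [hB, Matrix.mul_add, Matrix.add_mul, Matrix.mul_one, Matrix.one_mul] at h3
      exact add_left_cancel h3
    rw [h']
  rw [Matrix.mul_apply, Matrix.mul_apply] at h2
  simp only [Matrix.vecMulVec_apply, hv, hw, mul_sub, sub_mul, mul_ite, ite_mul,
    mul_one, mul_zero, one_mul, zero_mul, Finset.sum_sub_distrib,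
    Finset.sum_ite_eq', Finset.mem_univ, if_true] at h2
  have hne : (⟨k, hkn⟩ : Fin n) ≠ ⟨k+1, hk⟩ := by simp [Fin.ext_iff]
  split_ifs at h2 ⊢ with hj1 hj2 hi2 hi1 <;>
    first
      | exact absurd (hi1.symm.trans hi2) hne
      | exact absurd (hi2.symm.trans hi1) hne.symm
      | exact absurd (hj1.symm.trans hj2) hne
      | exact absurd (hj2.symm.trans hj1) hne.symm
      | (simp only [Finset.sum_sub_distrib, Finset.sum_ite_eq', Finset.mem_univ, if_true,
          Finset.sum_const_zero] at h2 <;> linear_combination h2)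
      | linear_combination h2

/-- Column relation: `a_{i,k+1} = T a_{i,k}` for `i ∉ {k, k+1}`. -/
lemma burau_relR1 {n : ℕ} (k : ℕ) (hk : k + 1 < n)
    (A : Matrix (Fin n) (Fin n) (LaurentPolynomial ℤ))
    (h : A * burauGen n k = burauGen n k * A)
    (i : Fin n) (h1 : (i : ℕ) ≠ k) (h2 : (i : ℕ) ≠ k + 1) :
    A i ⟨k+1, hk⟩ = T 1 * A i ⟨k, by omega⟩ := by
  have this := burau_rel hk A h i ⟨k+1, hk⟩
  split_ifs at this <;>
    simp only [Fin.ext_iff, Fin.val_mk] at * <;>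
    first | omega | linear_combination this | linear_combination -this | simp_all

/-- Row relation: `a_{k,j} = a_{k+1,j}` for `j ∉ {k, k+1}`. -/
lemma burau_relR2 {n : ℕ} (k : ℕ) (hk : k + 1 < n)
    (A : Matrix (Fin n) (Fin n) (LaurentPolynomial ℤ))
    (h : A * burauGen n k = burauGen n k * A)
    (j : Fin n) (h1 : (j : ℕ) ≠ k) (h2 : (j : ℕ) ≠ k + 1) :
    A ⟨k, by omega⟩ j = A ⟨k+1, hk⟩ j := by
  have this := burau_rel hk A h ⟨k+1, hk⟩ j
  split_ifs at this <;>
    simp only [Fin.ext_iff, Fin.val_mk] at * <;>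
    first | omega | linear_combination this | linear_combination -this | simp_all

/-- Corner relation: `a_{k,k+1} = T a_{k+1,k}`. -/
lemma burau_relR3 {n : ℕ} (k : ℕ) (hk : k + 1 < n)
    (A : Matrix (Fin n) (Fin n) (LaurentPolynomial ℤ))
    (h : A * burauGen n k = burauGen n k * A) :
    A ⟨k, by omega⟩ ⟨k+1, hk⟩ = T 1 * A ⟨k+1, hk⟩ ⟨k, by omega⟩ := by
  have this := burau_rel hk A h ⟨k, by omega⟩ ⟨k, by omega⟩
  split_ifs at this <;>
    simp only [Fin.ext_iff, Fin.val_mk] at * <;>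
    first | omega | linear_combination this | linear_combination -this | simp_all

/-- If an invertible matrix over `ℤ[T,T⁻¹]` commutes with all Burau generator matrices,
then its off-diagonal entries are `T^{j-1} p` for a single Laurent polynomial `p`
(with 0-indexed column `j`, the exponent `j-1` of the paper becomes `j`). -/
theorem stmt3 (n : ℕ) (hn : 2 ≤ n) (A : Matrix (Fin n) (Fin n) (LaurentPolynomial ℤ))
    (hA : IsUnit A)
    (hcomm : ∀ k : ℕ, k + 1 < n → A * burauGen n k = burauGen n k * A) :
    ∃ p : LaurentPolynomial ℤ, ∀ i j : Fin n, i ≠ j →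
      A i j = T ((j : ℕ) : ℤ) * p := by
  have h1n : 1 < n := by omega
  have h0n : 0 < n := by omega
  set p := A ⟨1, h1n⟩ ⟨0, h0n⟩ with hp
  -- first column: all entries below the diagonal entry are equal to `p`
  have base : ∀ m : ℕ, ∀ hm : m + 1 < n, A ⟨m+1, hm⟩ ⟨0, h0n⟩ = p := by
    intro m
    induction m with
    | zero => intro hm; rfl
    | succ m ih =>
      intro hm
      have e := burau_relR2 (m+1) hm A (hcomm (m+1) hm) ⟨0, h0n⟩
        (by simp) (by simp)
      rw [← e]
      exact ih (by omega)
  -- induction over columns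
  have col : ∀ jv : ℕ, ∀ hj : jv < n, ∀ i : Fin n, (i : ℕ) ≠ jv →
      A i ⟨jv, hj⟩ = T (jv : ℤ) * p := by
    intro jv
    induction jv with
    | zero =>
      intro hj i hi
      obtain ⟨m, hm⟩ : ∃ m, (i : ℕ) = m + 1 := ⟨(i : ℕ) - 1, by omega⟩
      have hmn : m + 1 < n := by rw [← hm]; exact i.isLt
      have hi' : i = ⟨m+1, hmn⟩ := Fin.ext hm
      rw [hi', base m hmn]
      simp [T_zero]
    | succ jv ih =>
      intro hj i hi
      have hj' : jv < n := by omega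
      have hT : (T ((jv+1 : ℕ) : ℤ) : LaurentPolynomial ℤ) = T 1 * T (jv : ℤ) := by
        rw [← T_add]; congr 1; push_cast; ring
      by_cases hij : (i : ℕ) = jv
      · have e3 := burau_relR3 jv hj A (hcomm jv hj)
        have hi' : i = ⟨jv, hj'⟩ := Fin.ext hij
        rw [hi', e3, ih hj' ⟨jv+1, hj⟩ (by simp), hT]
        ring
      · have e1 := burau_relR1 jv hj A (hcomm jv hj) i hij hi
        rw [e1, ih hj' i hij, hT]
        ring
  refine ⟨p, fun i j hij => ?_⟩
  have := col (j : ℕ) j.isLt i (fun h => hij (Fin.ext h))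
  simpa using this
end

section
/- For every integer n ≥ 2, the full-twist matrix Ω_n satisfies: (Ω_n)_{ij} = T^{j−1}(1 − T) for all indices i ≠ j, and (Ω_n)_{ii} = 1 − (1 − T) ∑_{m=1, m≠i}^{n} T^{m−1} for all i. -/
open LaurentPolynomial

/-- The full twist matrix `Ω_n = (ψ_1 ψ_2 ⋯ ψ_{n-1})^n`. -/
noncomputable def fullTwist (n : ℕ) : Matrix (Fin n) (Fin n) (LaurentPolynomial ℤ) :=
  (((List.range (n - 1)).map fun k => burauGen n k).prod) ^ n


noncomputable section

abbrev R := LaurentPolynomial ℤ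


/-- helper: sum picking out the term with `(k:ℕ) = a`. -/
lemma pick_nat {n : ℕ} (a : ℕ) (f : Fin n → R) (c : R) :
    ∑ k : Fin n, f k * (if (k : ℕ) = a then c else 0)
      = if h : a < n then f ⟨a, h⟩ * c else 0 := by
  split_ifs with h
  · have he : ∀ k : Fin n, ((k : ℕ) = a) ↔ (k = ⟨a, h⟩) := by
      intro k; constructor
      · intro hk; exact Fin.ext hk
      · intro hk; subst hk; rfl
    simp only [he]
    simp [mul_ite, Finset.sum_ite_eq']
  · have he : ∀ k : Fin n, ¬ ((k : ℕ) = a) := by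
      intro k hk; exact h (hk ▸ k.2)
    simp [he]

lemma pick_prop {n : ℕ} (p : Prop) [Decidable p] (j : Fin n) (f : Fin n → R) :
    ∑ k : Fin n, f k * (if (k : ℕ) = (j : ℕ) ∧ p then 1 else 0)
      = if p then f j else 0 := by
  by_cases hp : p
  · simp only [hp, and_true, Fin.val_inj]
    simp [mul_ite, Finset.sum_ite_eq']
  · simp [hp]

def Amat (n m : ℕ) : Matrix (Fin n) (Fin n) R := Matrix.of fun i j =>
  if (i : ℕ) = 0 then
    (if (j : ℕ) < m then (1 - T 1) * T ((j : ℕ) : ℤ)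
     else if (j : ℕ) = m then T ((m : ℕ) : ℤ) else 0)
  else if (i : ℕ) ≤ m then (if (j : ℕ) + 1 = (i : ℕ) then 1 else 0)
  else if (i : ℕ) = (j : ℕ) then 1 else 0

lemma burau_col {n m : ℕ} (h : m + 2 ≤ n) (k j : Fin n) :
    burauGen n m k j =
      (if (k : ℕ) = m then
        (if (j : ℕ) = m then 1 - T 1 else if (j : ℕ) = m + 1 then T 1 else 0) else 0)
      + (if (k : ℕ) = m + 1 then (if (j : ℕ) = m then (1 : R) else 0) else 0)
      + (if (k : ℕ) = (j : ℕ) ∧ ¬((j : ℕ) = m ∨ (j : ℕ) = m + 1) then 1 else 0) := by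
  simp only [burauGen, Matrix.of_apply, Fin.ext_iff]
  split_ifs <;> first | ring1 | omega | (exfalso; omega)

set_option maxHeartbeats 2000000 in
theorem Astep (n m : ℕ) (h : m + 2 ≤ n) :
    Amat n m * burauGen n m = Amat n (m + 1) := by
  refine Matrix.ext fun i j => ?_
  rw [Matrix.mul_apply]
  simp only [burau_col h, mul_add, Finset.sum_add_distrib, pick_nat, pick_prop]
  have hm : m < n := by omega
  have hm1 : m + 1 < n := by omega
  rw [dif_pos hm, dif_pos hm1]
  simp only [Amat, Matrix.of_apply]
  split_ifs <;>
    first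
      | ring1
      | omega
      | (exfalso; omega)
      | (rw [show ((j : Fin n) : ℕ) = m from by omega]; ring1)
      | (push_cast; rw [T_add]; ring1)

lemma Amat_zero (n : ℕ) : Amat n 0 = 1 := by
  refine Matrix.ext fun i j => ?_
  simp only [Amat, Matrix.of_apply, Matrix.one_apply, Fin.ext_iff]
  split_ifs <;> first | rfl | omega | (exfalso; omega) | (push_cast; simp)

lemma prod_eq (n : ℕ) (hn : 2 ≤ n) :
    ∀ m, m ≤ n - 1 → ((List.range m).map fun k => burauGen n k).prod = Amat n m := by
  intro m
  induction m with
  | zero => intro _; simp [Amat_zero]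
  | succ m ih =>
      intro hm
      rw [List.range_succ, List.map_append, List.prod_append, List.map_cons, List.map_nil,
        List.prod_cons, List.prod_nil, mul_one, ih (by omega), Astep n m (by omega)]

def Bmat (n k : ℕ) : Matrix (Fin n) (Fin n) R := Matrix.of fun i j =>
  if k ≤ (i : ℕ) then (if (j : ℕ) + k = (i : ℕ) then 1 else 0)
  else (1 - T 1) * T ((j : ℕ) : ℤ) + (if (j : ℕ) + k = n + (i : ℕ) then T ((n : ℕ) : ℤ) else 0)

lemma Bmat_zero (n : ℕ) : Bmat n 0 = 1 := by
  refine Matrix.ext fun i j => ?_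
  simp only [Bmat, Matrix.of_apply, Matrix.one_apply, Fin.ext_iff]
  split_ifs <;> first | rfl | omega | (exfalso; omega)

lemma Pcol {n : ℕ} (hn : 2 ≤ n) (k j : Fin n) :
    Amat n (n - 1) k j =
      (if (k : ℕ) = 0 then
        (if (j : ℕ) + 1 < n then (1 - T 1) * T ((j : ℕ) : ℤ) else T ((j : ℕ) : ℤ)) else 0)
      + (if (k : ℕ) = (j : ℕ) + 1 then 1 else 0) := by
  simp only [Amat, Matrix.of_apply]
  split_ifs <;>
    first
      | ring1
      | omega
      | (exfalso; omega)
      | (rw [show ((j : Fin n) : ℕ) = n - 1 from by omega]; ring1)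

set_option maxHeartbeats 2000000 in
theorem Bstep (n k : ℕ) (hn : 2 ≤ n) (hk : k ≤ n - 1) :
    Bmat n k * Amat n (n - 1) = Bmat n (k + 1) := by
  refine Matrix.ext fun i j => ?_
  rw [Matrix.mul_apply]
  simp only [Pcol hn, mul_add, Finset.sum_add_distrib, pick_nat]
  rw [dif_pos (show 0 < n by omega)]
  by_cases hj : (j : ℕ) + 1 < n
  · rw [dif_pos hj]
    simp only [Bmat, Matrix.of_apply]
    split_ifs <;>
      first
        | ring1
        | omega
        | (exfalso; omega)
        | (push_cast [T_add, T_zero]; ring1)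
        | (rw [show ((n : ℕ) : ℤ) = (((j : Fin n) : ℕ) : ℤ) + 1 from by omega];
            push_cast [T_add, T_zero]; ring1)
  · rw [dif_neg hj]
    simp only [Bmat, Matrix.of_apply]
    split_ifs <;>
      first
        | ring1
        | omega
        | (exfalso; omega)
        | (push_cast [T_add, T_zero]; ring1)
        | (rw [show ((n : ℕ) : ℤ) = (((j : Fin n) : ℕ) : ℤ) + 1 from by omega];
            push_cast [T_add, T_zero]; ring1)

lemma pow_eq (n : ℕ) (hn : 2 ≤ n) :
    ∀ k, k ≤ n → (Amat n (n - 1)) ^ k = Bmat n k := by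
  intro k
  induction k with
  | zero => intro _; rw [pow_zero, Bmat_zero]
  | succ k ih =>
      intro hk
      rw [pow_succ, ih (by omega), Bstep n k hn (by omega)]

lemma geom (n : ℕ) :
    ((1 : R) - T 1) * ∑ m : Fin n, T ((m : ℕ) : ℤ) = (1 : R) - T ((n : ℕ) : ℤ) := by
  rw [Finset.mul_sum]
  have h1 : ∀ a : ℕ, ((1 : R) - T 1) * T ((a : ℕ) : ℤ)
      = T ((a : ℕ) : ℤ) - T (((a + 1 : ℕ) : ℤ)) := by
    intro a
    push_cast [T_add]
    ring
  calc ∑ m : Fin n, ((1 : R) - T 1) * T ((m : ℕ) : ℤ)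
      = ∑ a ∈ Finset.range n, ((fun b : ℕ => T ((b : ℕ) : ℤ)) a
          - (fun b : ℕ => T ((b : ℕ) : ℤ)) (a + 1)) := by
        rw [← Fin.sum_univ_eq_sum_range]
        exact Finset.sum_congr rfl fun m _ => h1 m
    _ = T ((0 : ℕ) : ℤ) - T ((n : ℕ) : ℤ) := Finset.sum_range_sub' _ n
    _ = (1 : R) - T ((n : ℕ) : ℤ) := by norm_num

end

/-- Entries of the full twist: `(Ω_n)_{ij} = T^{j-1}(1-T)` off the diagonal (0-indexed:
exponent `j`), and `(Ω_n)_{ii} = 1 - (1-T) ∑_{m ≠ i} T^{m-1}`. -/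
theorem stmt4 (n : ℕ) (hn : 2 ≤ n) :
    (∀ i j : Fin n, i ≠ j →
      fullTwist n i j = T ((j : ℕ) : ℤ) * (1 - T 1)) ∧
    (∀ i : Fin n,
      fullTwist n i i =
        1 - (1 - T 1) * ∑ m ∈ Finset.univ.erase i, T ((m : ℕ) : ℤ)) := by
  have hfull : fullTwist n = Bmat n n := by
    rw [fullTwist, prod_eq n hn (n - 1) le_rfl, pow_eq n hn n le_rfl]
  constructor
  · intro i j hij
    have hij' : (i : ℕ) ≠ (j : ℕ) := fun h => hij (Fin.ext h)
    have hi := i.isLt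
    rw [hfull]
    simp only [Bmat, Matrix.of_apply]
    rw [if_neg (by omega), if_neg (by omega : ¬((j : ℕ) + n = n + (i : ℕ)))]
    ring
  · intro i
    have hi := i.isLt
    rw [hfull]
    simp only [Bmat, Matrix.of_apply]
    rw [if_neg (by omega : ¬(n ≤ (i : ℕ))), if_pos (by omega : (i : ℕ) + n = n + (i : ℕ))]
    have hs : ∑ m ∈ Finset.univ.erase i, (T ((m : ℕ) : ℤ) : R)
        = (∑ m : Fin n, (T ((m : ℕ) : ℤ) : R)) - T ((i : ℕ) : ℤ) := by
      rw [← Finset.add_sum_erase Finset.univ _ (Finset.mem_univ i)]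
      ring
    rw [hs]
    linear_combination geom n
end

section
/- Fix an integer n ≥ 2 and indices 1 ≤ i, j ≤ n. Then the sequence of Laurent polynomials k ↦ (Ω_n^k)_{ij} (for k ∈ ℕ, k ≥ 1) stabilizes positively, and for every r ∈ ℤ its eventual coefficient at r equals the coefficient of T^r in the formal power series T^{j−1}(1 − T) ∑_{m=0}^∞ T^{nm}; equivalently, the eventual coefficients are the coefficients of the unique formal power series S ∈ ℤ[[T]] satisfying (1 + T + ⋯ + T^{n−1}) · S = T^{j−1}. -/
open LaurentPolynomial

/-- The coefficient of `T^r` in a Laurent polynomial. -/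
noncomputable def lcoeff (p : LaurentPolynomial ℤ) (r : ℤ) : ℤ := AddMonoidAlgebra.coeff p r

/-- A sequence of Laurent polynomials stabilizes positively if for every `r₀` the
coefficients in degrees `≤ r₀` are eventually constant in `t`. -/
def StabilizesPositively (p : ℕ → LaurentPolynomial ℤ) : Prop :=
  ∀ r₀ : ℤ, ∃ t₀ : ℕ, ∀ t ≥ t₀, ∀ r ≤ r₀, lcoeff (p t) r = lcoeff (p t₀) r

/-- `L` is the eventual coefficient function of the sequence `p`. -/
def IsEventualCoeff (p : ℕ → LaurentPolynomial ℤ) (L : ℤ → ℤ) : Prop :=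
  ∀ r : ℤ, ∃ t₀ : ℕ, ∀ t ≥ t₀, lcoeff (p t) r = L r

/-!
The Coxeter element `P = ψ_1 ⋯ ψ_{n-1}` shifts the standard row vectors, `e_{i+1} P = e_i`,
sends `e_0` to `v + T^n e_{n-1}` where `v_j = (1 - T) T^j`, and fixes `v`, because the row
`(T^j)_j` is fixed by every `ψ_k`. Following `e_i` through `n` steps gives
`Ω_n = P^n = T^n I + 𝟙 v`, a scalar plus a rank-one matrix with `v · 𝟙 = 1 - T^n`, so
`Ω_n^k = T^{nk} I + (∑_{m<k} T^{nm}) 𝟙 v`. Below degree `nk` the `(i, j)` entry is thus the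
truncation of the power series `T^j (1 - T) / (1 - T^n) = T^j / (1 + T + ⋯ + T^{n-1})`.
-/

open Matrix

theorem vecMul_pow_of_vecMul_eq {R ι : Type*} [Semiring R] [Fintype ι] [DecidableEq ι]
    {v : ι → R} {M : Matrix ι ι R} (h : v ᵥ* M = v) (k : ℕ) : v ᵥ* M ^ k = v := by
  induction k with
  | zero => rw [pow_zero, vecMul_one]
  | succ k ih => rw [pow_succ, ← vecMul_vecMul, ih, h]

theorem pow_smul_one_add_vecMulVec {R ι : Type*} [CommRing R] [Fintype ι] [DecidableEq ι]
    {a : R} {u v : ι → R} (h : a + v ⬝ᵥ u = 1) (k : ℕ) :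
    (a • 1 + vecMulVec u v) ^ k =
      a ^ k • 1 + (∑ m ∈ Finset.range k, a ^ m) • vecMulVec u v := by
  induction k with
  | zero => simp
  | succ k ih =>
    have hsq : vecMulVec u v * vecMulVec u v = (1 - a) • vecMulVec u v := by
      rw [vecMulVec_mul_vecMulVec, vecMulVec_smul, ← h, add_sub_cancel_left]
    rw [pow_succ, ih, Finset.sum_range_succ]
    simp only [add_mul, mul_add, smul_mul_smul, one_mul, mul_one, Matrix.smul_mul, hsq]
    module

theorem eq_mul_geom_sum_add_pow_mul {R : Type*} [CommSemiring R] {f c x : R}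
    (h : f = c + x * f) (k : ℕ) : f = c * ∑ m ∈ Finset.range k, x ^ m + x ^ k * f := by
  induction k with
  | zero => simp
  | succ k ih =>
    calc f = c + x * (c * ∑ m ∈ Finset.range k, x ^ m + x ^ k * f) := by rw [← ih, ← h]
      _ = _ := by
        rw [Finset.sum_range_succ', Finset.sum_congr rfl fun m _ => pow_succ' x m,
          ← Finset.mul_sum]
        ring

section PowerSeries

open PowerSeries

variable {R : Type*}

theorem PowerSeries.isUnit_geom_sum_X [CommRing R] {n : ℕ} (hn : 0 < n) :
    IsUnit (∑ m ∈ Finset.range n, X ^ m : PowerSeries R) := by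
  obtain ⟨n, rfl⟩ := Nat.exists_eq_add_one_of_ne_zero hn.ne'
  simp [isUnit_iff_constantCoeff, Finset.sum_range_succ']

theorem PowerSeries.coeff_coe_add_X_pow_mul_of_lt [Semiring R] (p : Polynomial R)
    (g : PowerSeries R) {N r : ℕ} (hr : r < N) :
    coeff r ((p : PowerSeries R) + X ^ N * g) = p.coeff r := by
  rw [map_add, coeff_X_pow_mul', if_neg (by omega), add_zero, Polynomial.coeff_coe]

end PowerSeries

theorem lcoeff_add (p q : LaurentPolynomial ℤ) (r : ℤ) :
    lcoeff (p + q) r = lcoeff p r + lcoeff q r :=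
  rfl

theorem lcoeff_toLaurent (p : Polynomial ℤ) (r : ℤ) :
    lcoeff (Polynomial.toLaurent p) r = if 0 ≤ r then p.coeff r.toNat else 0 := by
  rw [lcoeff, coeff_toLaurent]
  split_ifs with hr
  · obtain ⟨m, rfl⟩ := Int.eq_ofNat_of_zero_le hr
    exact Finsupp.mapDomain_apply Nat.castEmbedding.injective _ m
  · exact Finsupp.mapDomain_of_notMem_range _ _ (by simp; omega)

theorem lcoeff_T_one_pow_of_lt {N : ℕ} {r : ℤ} (hr : r < N) : lcoeff (T 1 ^ N) r = 0 := by
  rw [lcoeff, T_pow, T_apply, if_neg (by omega)]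

theorem stabilizesPositively_of_lcoeff_eq {p : ℕ → LaurentPolynomial ℤ} {f : ℤ → ℤ}
    (h : ∀ k : ℕ, ∀ r : ℤ, r ≤ k → lcoeff (p k) r = f r) : StabilizesPositively p :=
  fun r₀ => ⟨r₀.toNat, fun t ht r hr => by rw [h t r (by omega), h _ r (by omega)]⟩

theorem isEventualCoeff_of_lcoeff_eq {p : ℕ → LaurentPolynomial ℤ} {f : ℤ → ℤ}
    (h : ∀ k : ℕ, ∀ r : ℤ, r ≤ k → lcoeff (p k) r = f r) : IsEventualCoeff p f :=
  fun r => ⟨r.toNat, fun t ht => h t r (by omega)⟩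

section Burau

variable {n : ℕ}

theorem vecMul_burauGen_apply (x : Fin n → LaurentPolynomial ℤ) {k : ℕ} (hk : k + 1 < n)
    (j : Fin n) :
    (x ᵥ* burauGen n k) j =
      if (j : ℕ) = k then x ⟨k, by omega⟩ * (1 - T 1) + x ⟨k + 1, hk⟩
      else if (j : ℕ) = k + 1 then x ⟨k, by omega⟩ * T 1
      else x j := by
  have hterm : ∀ i, x i * burauGen n k i j =
      (if i = ⟨k, by omega⟩ then
        x i * (if (j : ℕ) = k then 1 - T 1 else if (j : ℕ) = k + 1 then T 1 else 0) else 0) +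
      (if i = ⟨k + 1, hk⟩ then (if (j : ℕ) = k then x i else 0) else 0) +
      (if i = j then (if (j : ℕ) = k ∨ (j : ℕ) = k + 1 then 0 else x i) else 0) := by
    intro i
    simp only [burauGen, of_apply, Fin.ext_iff]
    split_ifs <;> first | ring1 | (exfalso; omega)
  simp only [vecMul, dotProduct, hterm, Finset.sum_add_distrib, Finset.sum_ite_eq',
    Finset.mem_univ, if_true]
  split_ifs <;> first | ring1 | (exfalso; omega)

noncomputable def coxeterPartial (n k : ℕ) : Matrix (Fin n) (Fin n) (LaurentPolynomial ℤ) :=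
  of fun i j =>
    if (i : ℕ) = 0 then
      if (j : ℕ) < k then T 1 ^ (j : ℕ) * (1 - T 1) else if (j : ℕ) = k then T 1 ^ k else 0
    else if (i : ℕ) ≤ k then (if (j : ℕ) + 1 = i then 1 else 0)
    else if (j : ℕ) = i then 1 else 0

theorem coxeterPartial_zero : coxeterPartial n 0 = 1 := by
  ext i j : 1
  simp only [coxeterPartial, of_apply, one_apply, Fin.ext_iff, pow_zero]
  split_ifs <;> first | rfl | (exfalso; omega)

theorem coxeterPartial_mul_burauGen {k : ℕ} (hk : k + 1 < n) :
    coxeterPartial n k * burauGen n k = coxeterPartial n (k + 1) := by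
  ext i j : 1
  rw [mul_apply_eq_vecMul, vecMul_burauGen_apply _ hk]
  simp only [coxeterPartial, of_apply]
  split_ifs <;> first | ring1 | (exfalso; omega) | (subst_vars; ring1)

theorem prod_burauGen_eq_coxeterPartial {k : ℕ} (hk : k < n) :
    ((List.range k).map fun l => burauGen n l).prod = coxeterPartial n k := by
  induction k with
  | zero => exact coxeterPartial_zero.symm
  | succ k ih =>
    rw [List.range_succ, List.map_append, List.prod_append, ih (by omega), List.map_singleton,
      List.prod_singleton, coxeterPartial_mul_burauGen hk]

theorem fullTwist_eq_coxeterPartial_pow (hn : 0 < n) :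
    fullTwist n = coxeterPartial n (n - 1) ^ n := by
  rw [fullTwist, prod_burauGen_eq_coxeterPartial (by omega)]

noncomputable def tPowers (n : ℕ) : Fin n → LaurentPolynomial ℤ := fun j => T 1 ^ (j : ℕ)

theorem tPowers_vecMul_burauGen {k : ℕ} (hk : k + 1 < n) :
    tPowers n ᵥ* burauGen n k = tPowers n := by
  funext j
  rw [vecMul_burauGen_apply _ hk]
  simp only [tPowers]
  split_ifs with h₁ h₂
  · rw [h₁]; ring
  · rw [h₂]; ring
  · rfl

theorem tPowers_vecMul_coxeterPartial {k : ℕ} (hk : k < n) :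
    tPowers n ᵥ* coxeterPartial n k = tPowers n := by
  induction k with
  | zero => rw [coxeterPartial_zero, vecMul_one]
  | succ k ih =>
    rw [← coxeterPartial_mul_burauGen hk, ← vecMul_vecMul, ih (by omega),
      tPowers_vecMul_burauGen hk]

theorem coxeterPartial_row_succ {i : ℕ} (hi : i + 1 < n) :
    (coxeterPartial n (n - 1)).row ⟨i + 1, hi⟩ = Pi.single ⟨i, by omega⟩ 1 := by
  funext j
  simp only [row_apply, coxeterPartial, of_apply, Pi.single_apply, Fin.ext_iff]
  split_ifs <;> first | rfl | (exfalso; omega)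

theorem coxeterPartial_row_zero (hn : 0 < n) :
    (coxeterPartial n (n - 1)).row ⟨0, hn⟩ =
      (1 - T 1 : LaurentPolynomial ℤ) • tPowers n +
        T 1 ^ n • Pi.single ⟨n - 1, by omega⟩ 1 := by
  obtain ⟨m, rfl⟩ := Nat.exists_eq_add_one_of_ne_zero hn.ne'
  funext j
  simp only [row_apply, coxeterPartial, of_apply, tPowers, Pi.add_apply, Pi.smul_apply,
    Pi.single_apply, Fin.ext_iff, smul_eq_mul, Nat.add_sub_cancel]
  split_ifs <;> first | ring1 | (exfalso; omega) | (rename_i h; rw [h]; ring1)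

theorem single_vecMul_coxeterPartial_pow {i k : ℕ} (h : i + k < n) :
    Pi.single ⟨i + k, h⟩ 1 ᵥ* coxeterPartial n (n - 1) ^ k =
      Pi.single ⟨i, by omega⟩ 1 := by
  induction k with
  | zero => rw [pow_zero, vecMul_one]; rfl
  | succ k ih =>
    rw [pow_succ', ← vecMul_vecMul, single_one_vecMul,
      show (⟨i + (k + 1), h⟩ : Fin n) = ⟨i + k + 1, h⟩ from rfl, coxeterPartial_row_succ,
      ih]

theorem single_vecMul_fullTwist (i : Fin n) :
    Pi.single i 1 ᵥ* fullTwist n =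
      T 1 ^ n • Pi.single i 1 + (1 - T 1 : LaurentPolynomial ℤ) • tPowers n := by
  have hn : 0 < n := i.pos
  set P := coxeterPartial n (n - 1)
  have hsplit : P ^ n = P ^ (i : ℕ) * (P * P ^ (n - 1 - i)) := by
    rw [← pow_succ', ← pow_add, show (i : ℕ) + (n - 1 - i + 1) = n by omega]
  have h_to_first : Pi.single i 1 ᵥ* P ^ (i : ℕ) = Pi.single ⟨0, hn⟩ 1 := by
    simpa using single_vecMul_coxeterPartial_pow (i := 0) (k := i) (by omega)
  have h_from_last : Pi.single ⟨n - 1, by omega⟩ 1 ᵥ* P ^ (n - 1 - i) = Pi.single i 1 := by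
    have hlast : (⟨n - 1, by omega⟩ : Fin n) = ⟨i + (n - 1 - i), by omega⟩ :=
      Fin.ext (by simp; omega)
    rw [hlast, single_vecMul_coxeterPartial_pow]
  have h_fixed : ((1 - T 1 : LaurentPolynomial ℤ) • tPowers n) ᵥ* P ^ (n - 1 - i) =
      (1 - T 1 : LaurentPolynomial ℤ) • tPowers n := by
    rw [smul_vecMul, vecMul_pow_of_vecMul_eq (tPowers_vecMul_coxeterPartial (by omega))]
  rw [fullTwist_eq_coxeterPartial_pow hn, hsplit, ← vecMul_vecMul, ← vecMul_vecMul,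
    h_to_first, single_one_vecMul, coxeterPartial_row_zero hn, add_vecMul, h_fixed,
    smul_vecMul, h_from_last, add_comm]

theorem fullTwist_eq_smul_one_add_vecMulVec :
    fullTwist n = (T 1 : LaurentPolynomial ℤ) ^ n • 1 +
      vecMulVec (1 : Fin n → _) ((1 - T 1 : LaurentPolynomial ℤ) • tPowers n) := by
  refine ext_of_single_vecMul fun i => ?_
  rw [single_vecMul_fullTwist, vecMul_add, vecMul_smul, vecMul_one, vecMul_vecMulVec,
    single_one_dotProduct, Pi.one_apply, one_smul]

open Polynomial in
theorem fullTwist_pow_apply (k : ℕ) (i j : Fin n) :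
    (fullTwist n ^ k) i j =
      toLaurent (X ^ (j : ℕ) * (1 - X) * ∑ m ∈ Finset.range k, X ^ (n * m)) +
        if i = j then T 1 ^ (n * k) else 0 := by
  have hsum : (T 1 : LaurentPolynomial ℤ) ^ n +
      ((1 - T 1 : LaurentPolynomial ℤ) • tPowers n) ⬝ᵥ 1 = 1 := by
    simp only [dotProduct_one, Pi.smul_apply, smul_eq_mul, ← Finset.mul_sum, tPowers]
    rw [Fin.sum_univ_eq_sum_range (fun m => (T 1 : LaurentPolynomial ℤ) ^ m), mul_neg_geom_sum,
      add_sub_cancel]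
  rw [fullTwist_eq_smul_one_add_vecMulVec, pow_smul_one_add_vecMulVec hsum]
  simp only [Matrix.add_apply, Matrix.smul_apply, one_apply, vecMulVec_apply, Pi.one_apply,
    Pi.smul_apply, tPowers, smul_eq_mul, map_mul, map_sub, map_one, map_pow, map_sum,
    toLaurent_X, ← pow_mul]
  split_ifs <;> ring

open PowerSeries in
theorem lcoeff_fullTwist_pow {S : PowerSeries ℤ} (i j : Fin n)
    (hS : (∑ m ∈ Finset.range n, X ^ m) * S = X ^ (j : ℕ)) {k : ℕ} {r : ℤ}
    (hr : r < (n * k : ℕ)) :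
    lcoeff ((fullTwist n ^ k) i j) r = if 0 ≤ r then coeff r.toNat S else 0 := by
  have hrec : S = X ^ (j : ℕ) * (1 - X) + X ^ n * S := by
    linear_combination (1 - X) * hS - S * mul_neg_geom_sum (X : PowerSeries ℤ) n
  have hdiag : lcoeff (if i = j then T 1 ^ (n * k) else 0) r = 0 := by
    split_ifs
    exacts [lcoeff_T_one_pow_of_lt hr, rfl]
  rw [fullTwist_pow_apply, lcoeff_add, lcoeff_toLaurent, hdiag, add_zero,
    eq_mul_geom_sum_add_pow_mul hrec k]
  split_ifs
  · rw [← pow_mul, ← coeff_coe_add_X_pow_mul_of_lt _ S (N := n * k) (by omega),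
      ← Polynomial.coeToPowerSeries.ringHom_apply]
    simp only [map_mul, map_sub, map_one, map_pow, map_sum,
      Polynomial.coeToPowerSeries.ringHom_apply, Polynomial.coe_X, pow_mul]
  · rfl

end Burau

theorem stmt7_general (n : ℕ) (i j : Fin n) :
    StabilizesPositively (fun k => (fullTwist n ^ (k + 1)) i j) ∧
    ∃ S : PowerSeries ℤ,
      (∑ m ∈ Finset.range n, PowerSeries.X ^ m) * S = PowerSeries.X ^ (j : ℕ) ∧
      IsEventualCoeff (fun k => (fullTwist n ^ (k + 1)) i j)
        (fun r => if 0 ≤ r then PowerSeries.coeff r.toNat S else 0) := by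
  obtain ⟨S, hS⟩ : _ ∣ (PowerSeries.X : PowerSeries ℤ) ^ (j : ℕ) :=
    (PowerSeries.isUnit_geom_sum_X i.pos).dvd
  have hcoeff : ∀ k : ℕ, ∀ r : ℤ, r ≤ k → lcoeff ((fullTwist n ^ (k + 1)) i j) r =
      if 0 ≤ r then PowerSeries.coeff r.toNat S else 0 := fun k r hr =>
    lcoeff_fullTwist_pow i j hS.symm (by have := Nat.le_mul_of_pos_left (k + 1) i.pos; omega)
  exact ⟨stabilizesPositively_of_lcoeff_eq hcoeff, S, hS.symm,
    isEventualCoeff_of_lcoeff_eq hcoeff⟩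

/-- The sequence `k ↦ (Ω_n^k)_{ij}` (for `k ≥ 1`) stabilizes positively, and its eventual
coefficients are those of the unique formal power series `S` with
`(1 + T + ⋯ + T^{n-1}) S = T^{j-1}` (0-indexed: `T^j`); coefficients in negative
degrees are eventually `0`. -/
theorem stmt7 (n : ℕ) (hn : 2 ≤ n) (i j : Fin n) :
    StabilizesPositively (fun k => (fullTwist n ^ (k + 1)) i j) ∧
    ∃ S : PowerSeries ℤ,
      (∑ m ∈ Finset.range n, PowerSeries.X ^ m) * S = PowerSeries.X ^ (j : ℕ) ∧
      IsEventualCoeff (fun k => (fullTwist n ^ (k + 1)) i j)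
        (fun r => if 0 ≤ r then PowerSeries.coeff r.toNat S else 0) :=
  stmt7_general n i j
end

section
/- For every integer n ≥ 2, working over the field ℚ(T) of rational functions, the full-twist matrix and the limit matrix satisfy the absorption identities Ω_n P_n = P_n and P_n Ω_n = P_n; consequently P_n Ω_n P_n = P_n. -/
/-- The unreduced Burau generator matrix over the field `ℚ(T)` of rational functions
(0-indexed: rows/columns `k` and `k+1` carry the nontrivial block). -/
noncomputable def burauGenQ (n : ℕ) (k : ℕ) : Matrix (Fin n) (Fin n) (RatFunc ℚ) :=
  Matrix.of fun i j =>
    if (i : ℕ) = k ∧ (j : ℕ) = k then 1 - RatFunc.X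
    else if (i : ℕ) = k ∧ (j : ℕ) = k + 1 then RatFunc.X
    else if (i : ℕ) = k + 1 ∧ (j : ℕ) = k then 1
    else if (i : ℕ) = k + 1 ∧ (j : ℕ) = k + 1 then 0
    else if i = j then 1 else 0

/-- The full twist matrix `Ω_n = (ψ_1 ψ_2 ⋯ ψ_{n-1})^n` over `ℚ(T)`. -/
noncomputable def fullTwistQ (n : ℕ) : Matrix (Fin n) (Fin n) (RatFunc ℚ) :=
  (((List.range (n - 1)).map fun k => burauGenQ n k).prod) ^ n

/-- The limit matrix `P_n` with entries `(P_n)_{ij} = T^{j-1}/(1 + T + ⋯ + T^{n-1})`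
(0-indexed: numerator `T^j`). -/
noncomputable def limitMatrix (n : ℕ) : Matrix (Fin n) (Fin n) (RatFunc ℚ) :=
  Matrix.of fun _ j => RatFunc.X ^ (j : ℕ) / ∑ m ∈ Finset.range n, RatFunc.X ^ m


/-!
Each Burau generator is a rank-one perturbation `1 + (T e_k - e_{k+1}) (e_{k+1} - e_k)ᵀ` of the
identity, so it fixes the all-ones column vector `𝟙` on the left and the row vector
`v = (1, T, …, T^{n-1})` on the right; hence so does the full twist. The limit matrix is the
rank-one projection `𝟙 vᵀ / (v ⬝ 𝟙)`, which absorbs any matrix fixing both `𝟙` and `v`.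
-/

open Matrix

namespace Matrix

variable {ι R K : Type*} [Fintype ι] [DecidableEq ι]

section Fixing

variable [Semiring R]

def mulVecFixing (u : ι → R) : Submonoid (Matrix ι ι R) where
  carrier := {M | M *ᵥ u = u}
  mul_mem' {A B} (hA : A *ᵥ u = u) (hB : B *ᵥ u = u) := by
    show (A * B) *ᵥ u = u
    rw [← mulVec_mulVec, hB, hA]
  one_mem' := one_mulVec u

def vecMulFixing (v : ι → R) : Submonoid (Matrix ι ι R) where
  carrier := {M | v ᵥ* M = v}
  mul_mem' {A B} (hA : v ᵥ* A = v) (hB : v ᵥ* B = v) := by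
    show v ᵥ* (A * B) = v
    rw [← vecMul_vecMul, hA, hB]
  one_mem' := vecMul_one v

theorem mul_vecMulVec_of_mem_mulVecFixing {M : Matrix ι ι R} {u : ι → R}
    (h : M ∈ mulVecFixing u) (w : ι → R) : M * vecMulVec u w = vecMulVec u w := by
  rw [mul_vecMulVec, show M *ᵥ u = u from h]

theorem vecMulVec_mul_of_mem_vecMulFixing {M : Matrix ι ι R} {v : ι → R}
    (h : M ∈ vecMulFixing v) (u : ι → R) (c : R) :
    vecMulVec u (c • v) * M = vecMulVec u (c • v) := by
  rw [vecMulVec_mul, smul_vecMul, show v ᵥ* M = v from h]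

end Fixing

section RankOne

variable [CommSemiring R]

theorem one_add_vecMulVec_mem_mulVecFixing {x y u : ι → R} (h : y ⬝ᵥ u = 0) :
    1 + vecMulVec x y ∈ mulVecFixing u := by
  change (1 + vecMulVec x y) *ᵥ u = u
  rw [add_mulVec, one_mulVec, vecMulVec_mulVec, h, MulOpposite.op_zero, zero_smul, add_zero]

theorem one_add_vecMulVec_mem_vecMulFixing {x y v : ι → R} (h : v ⬝ᵥ x = 0) :
    1 + vecMulVec x y ∈ vecMulFixing v := by
  change v ᵥ* (1 + vecMulVec x y) = v
  rw [vecMul_add, vecMul_one, vecMul_vecMulVec, h, zero_smul, add_zero]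

end RankOne

omit [DecidableEq ι] in
theorem isIdempotentElem_vecMulVec_inv_dotProduct_smul [Field K] (u v : ι → K) :
    IsIdempotentElem (vecMulVec u ((v ⬝ᵥ u)⁻¹ • v)) := by
  rw [IsIdempotentElem, vecMulVec_mul_vecMulVec, smul_dotProduct, smul_smul, smul_eq_mul]
  by_cases h : v ⬝ᵥ u = 0
  · -- `0⁻¹ = 0`, so the matrix is `0`
    simp [h]
  · rw [inv_mul_cancel₀ h, one_mul]

end Matrix

noncomputable def xPowers (n : ℕ) : Fin n → RatFunc ℚ := fun i => RatFunc.X ^ (i : ℕ)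

theorem limitMatrix_eq_vecMulVec (n : ℕ) :
    limitMatrix n = vecMulVec 1 ((xPowers n ⬝ᵥ 1)⁻¹ • xPowers n) := by
  ext i j
  simp [limitMatrix, xPowers, vecMulVec_apply, dotProduct_one, Fin.sum_univ_eq_sum_range,
    div_eq_inv_mul]

section Burau

variable {n k : ℕ}

theorem burauGenQ_eq_one_add_vecMulVec (hk : k + 1 < n) :
    burauGenQ n k = 1 + vecMulVec
      (RatFunc.X • Pi.single ⟨k, by omega⟩ 1 - Pi.single ⟨k + 1, hk⟩ 1)
      (Pi.single ⟨k + 1, hk⟩ 1 - Pi.single ⟨k, by omega⟩ 1) := by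
  ext i j
  simp only [burauGenQ, of_apply, Matrix.add_apply, one_apply, vecMulVec_apply, Pi.sub_apply,
    Pi.smul_apply, Pi.single_apply, Fin.ext_iff, smul_eq_mul]
  split_ifs <;> first | omega | ring

theorem burauGenQ_mem_mulVecFixing_one (hk : k + 1 < n) :
    burauGenQ n k ∈ mulVecFixing 1 := by
  rw [burauGenQ_eq_one_add_vecMulVec hk]
  refine one_add_vecMulVec_mem_mulVecFixing ?_
  simp [sub_dotProduct]

theorem burauGenQ_mem_vecMulFixing_xPowers (hk : k + 1 < n) :
    burauGenQ n k ∈ vecMulFixing (xPowers n) := by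
  rw [burauGenQ_eq_one_add_vecMulVec hk]
  refine one_add_vecMulVec_mem_vecMulFixing ?_
  simp [xPowers, dotProduct_sub, dotProduct_single, pow_succ, mul_comm]

end Burau

theorem fullTwistQ_mem {n : ℕ} {S : Submonoid (Matrix (Fin n) (Fin n) (RatFunc ℚ))}
    (h : ∀ k, k + 1 < n → burauGenQ n k ∈ S) : fullTwistQ n ∈ S := by
  refine pow_mem (S.list_prod_mem fun M hM => ?_) n
  obtain ⟨k, hk, rfl⟩ := List.mem_map.1 hM
  exact h k (by have := List.mem_range.1 hk; omega)

theorem stmt11_general (n : ℕ) :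
    fullTwistQ n * limitMatrix n = limitMatrix n ∧
    limitMatrix n * fullTwistQ n = limitMatrix n ∧
    limitMatrix n * fullTwistQ n * limitMatrix n = limitMatrix n := by
  have absorb_left : fullTwistQ n * limitMatrix n = limitMatrix n := by
    rw [limitMatrix_eq_vecMulVec]
    exact mul_vecMulVec_of_mem_mulVecFixing
      (fullTwistQ_mem fun _ => burauGenQ_mem_mulVecFixing_one) _
  have absorb_right : limitMatrix n * fullTwistQ n = limitMatrix n := by
    rw [limitMatrix_eq_vecMulVec]
    exact vecMulVec_mul_of_mem_vecMulFixing
      (fullTwistQ_mem fun _ => burauGenQ_mem_vecMulFixing_xPowers) _ _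
  refine ⟨absorb_left, absorb_right, ?_⟩
  rw [absorb_right, limitMatrix_eq_vecMulVec]
  exact isIdempotentElem_vecMulVec_inv_dotProduct_smul _ _

/-- Absorption identities: `Ω_n P_n = P_n`, `P_n Ω_n = P_n`, hence `P_n Ω_n P_n = P_n`. -/
theorem stmt11 (n : ℕ) (hn : 2 ≤ n) :
    fullTwistQ n * limitMatrix n = limitMatrix n ∧
    limitMatrix n * fullTwistQ n = limitMatrix n ∧
    limitMatrix n * fullTwistQ n * limitMatrix n = limitMatrix n :=
  stmt11_general n
end
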